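/- For every ρ ∈ (−1, 0), the quadrant probability of the standard bivariate normal distribution with correlation ρ satisfies ∫₀^∞ ∫₀^∞ φ_ρ(x, y) dx dy = −(1/(2π)) · arctan(√(1 − ρ²) / ρ). -/

import Mathlib

open Real Set MeasureTheory Filter Topology

/-!
Substituting `y = x v` in the inner integral turns the exponent into
`-x² ((v - ρ)² + 1 - ρ²) / (2 (1 - ρ²))`. After swapping the two integrals the `x`-integral is
`∫₀^∞ x e^{-b x²} dx = 1 / (2b)`, and what remains is an arctangent integral in `v`, giving
Sheppard's formula `1/4 + arcsin ρ / (2π)` for every `ρ ∈ (-1, 1)`. For `ρ < 0`,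
`arctan (1/t) = -π/2 - arctan t` with `t = ρ / √(1 - ρ²)` turns this into the stated form.
-/

theorem integral_Ioi_mul_exp_neg_mul_sq {b : ℝ} (hb : 0 < b) :
    ∫ x in Ioi (0 : ℝ), x * exp (-b * x ^ 2) = (2 * b)⁻¹ := by
  have h : ((∫ x in Ioi (0 : ℝ), x * exp (-b * x ^ 2) : ℝ) : ℂ) = ((2 * b)⁻¹ : ℝ) := by
    rw [← integral_complex_ofReal]
    push_cast
    exact integral_mul_cexp_neg_mul_sq (by simpa using hb)
  exact_mod_cast h

theorem integrable_inv_sub_sq_add_sq (c : ℝ) {s : ℝ} (hs : 0 < s) :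
    Integrable fun v : ℝ ↦ ((v - c) ^ 2 + s ^ 2)⁻¹ := by
  refine ((integrable_inv_one_add_sq.comp_div hs.ne').comp_sub_right c |>.const_mul (s ^ 2)⁻¹).congr
    (.of_forall fun v ↦ ?_)
  field_simp
  ring

theorem integral_Ioi_inv_sub_sq_add_sq (c : ℝ) {s : ℝ} (hs : 0 < s) :
    ∫ v in Ioi (0 : ℝ), ((v - c) ^ 2 + s ^ 2)⁻¹ = (π / 2 + arctan (c / s)) / s := by
  have hderiv (v : ℝ) : HasDerivAt (fun v ↦ arctan ((v - c) / s) / s) ((v - c) ^ 2 + s ^ 2)⁻¹ v :=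
    (((hasDerivAt_id' v).sub_const c).div_const s).arctan.div_const s |>.congr_deriv
      (by field_simp; ring)
  have hlim : Tendsto (fun v ↦ arctan ((v - c) / s) / s) atTop (𝓝 (π / 2 / s)) :=
    ((tendsto_nhds_of_tendsto_nhdsWithin tendsto_arctan_atTop).comp
      ((tendsto_atTop_add_const_right _ (-c) tendsto_id).atTop_div_const hs)).div_const s
  rw [integral_Ioi_of_hasDerivAt_of_tendsto' (fun v _ ↦ hderiv v)
    (integrable_inv_sub_sq_add_sq c hs).integrableOn hlim]
  simp only [zero_sub, neg_div, arctan_neg, sub_neg_eq_add]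
  ring

theorem integral_Ioi_integral_Ioi_mul_exp_neg_mul_sq {b : ℝ → ℝ} (hb_meas : Measurable b)
    (hb_pos : ∀ v > 0, 0 < b v) (hb_int : IntegrableOn (fun v ↦ (b v)⁻¹) (Ioi 0)) :
    ∫ x in Ioi (0 : ℝ), ∫ v in Ioi (0 : ℝ), x * exp (-b v * x ^ 2) =
      ∫ v in Ioi (0 : ℝ), (2 * b v)⁻¹ := by
  have hmeas : AEStronglyMeasurable (Function.uncurry fun x v ↦ x * exp (-b v * x ^ 2))
      ((volume.restrict (Ioi 0)).prod (volume.restrict (Ioi 0))) := by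
    apply Measurable.aestronglyMeasurable
    fun_prop
  have hint : Integrable (Function.uncurry fun x v ↦ x * exp (-b v * x ^ 2))
      ((volume.restrict (Ioi 0)).prod (volume.restrict (Ioi 0))) := by
    refine (integrable_prod_iff' hmeas).2 ⟨?_, ?_⟩
    · filter_upwards [self_mem_ae_restrict measurableSet_Ioi] with v hv
      exact (integrable_mul_exp_neg_mul_sq (hb_pos v hv)).integrableOn
    · refine (hb_int.const_mul 2⁻¹).congr ?_
      filter_upwards [self_mem_ae_restrict measurableSet_Ioi] with v hv
      rw [← mul_inv, ← integral_Ioi_mul_exp_neg_mul_sq (hb_pos v hv)]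
      refine setIntegral_congr_fun measurableSet_Ioi fun x hx ↦ ?_
      simp only [Function.uncurry_apply_pair, norm_mul, norm_of_nonneg hx.le,
        norm_of_nonneg (exp_pos _).le]
  rw [integral_integral_swap hint]
  refine setIntegral_congr_fun measurableSet_Ioi fun v hv ↦ ?_
  exact integral_Ioi_mul_exp_neg_mul_sq (hb_pos v hv)

noncomputable def bivariateNormalDensity (ρ x y : ℝ) : ℝ :=
  1 / (2 * π * √(1 - ρ ^ 2)) * exp (-(x ^ 2 - 2 * ρ * x * y + y ^ 2) / (2 * (1 - ρ ^ 2)))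

theorem integral_Ioi_bivariateNormalDensity_eq (ρ : ℝ) {x : ℝ} (hx : 0 < x) :
    ∫ y in Ioi (0 : ℝ), bivariateNormalDensity ρ x y =
      (2 * π * √(1 - ρ ^ 2))⁻¹ *
        ∫ v in Ioi (0 : ℝ), x * exp (-(((v - ρ) ^ 2 + (1 - ρ ^ 2)) / (2 * (1 - ρ ^ 2))) * x ^ 2) := by
  have hsub := integral_comp_mul_left_Ioi (bivariateNormalDensity ρ x) 0 hx
  rw [mul_zero, smul_eq_mul, eq_inv_mul_iff_mul_eq₀ hx.ne'] at hsub
  rw [← hsub, ← integral_const_mul, ← integral_const_mul]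
  refine setIntegral_congr_fun measurableSet_Ioi fun v _ ↦ ?_
  unfold bivariateNormalDensity
  ring_nf

theorem integral_Ioi_integral_Ioi_bivariateNormalDensity {ρ : ℝ} (hρ : ρ ∈ Ioo (-1 : ℝ) 1) :
    ∫ x in Ioi (0 : ℝ), ∫ y in Ioi (0 : ℝ), bivariateNormalDensity ρ x y =
      1 / 4 + arcsin ρ / (2 * π) := by
  have hvar : 0 < 1 - ρ ^ 2 := by nlinarith [hρ.1, hρ.2]
  set s := √(1 - ρ ^ 2)
  have hs : 0 < s := sqrt_pos.2 hvar
  have hs2 : s ^ 2 = 1 - ρ ^ 2 := sq_sqrt hvar.le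
  set b : ℝ → ℝ := fun v ↦ ((v - ρ) ^ 2 + (1 - ρ ^ 2)) / (2 * (1 - ρ ^ 2))
  have hb_inv (v : ℝ) : (b v)⁻¹ = 2 * s ^ 2 * ((v - ρ) ^ 2 + s ^ 2)⁻¹ := by
    simp only [b, inv_div, hs2]
    ring
  have hb_pos : ∀ v > 0, 0 < b v := fun v _ ↦ by positivity
  have hb_int : IntegrableOn (fun v ↦ (b v)⁻¹) (Ioi 0) := by
    simp only [hb_inv]
    exact ((integrable_inv_sub_sq_add_sq ρ hs).const_mul _).integrableOn
  calc ∫ x in Ioi (0 : ℝ), ∫ y in Ioi (0 : ℝ), bivariateNormalDensity ρ x y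
      = ∫ x in Ioi (0 : ℝ), (2 * π * s)⁻¹ * ∫ v in Ioi (0 : ℝ), x * exp (-b v * x ^ 2) :=
        setIntegral_congr_fun measurableSet_Ioi fun x hx ↦
          integral_Ioi_bivariateNormalDensity_eq ρ hx
    _ = (2 * π * s)⁻¹ * ∫ v in Ioi (0 : ℝ), s ^ 2 * ((v - ρ) ^ 2 + s ^ 2)⁻¹ := by
        rw [integral_const_mul,
          integral_Ioi_integral_Ioi_mul_exp_neg_mul_sq (by fun_prop) hb_pos hb_int]
        congr 1
        refine setIntegral_congr_fun measurableSet_Ioi fun v _ ↦ ?_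
        rw [mul_inv, hb_inv]
        ring
    _ = 1 / 4 + arcsin ρ / (2 * π) := by
        rw [integral_const_mul, integral_Ioi_inv_sub_sq_add_sq ρ hs, arcsin_eq_arctan hρ]
        field_simp
        ring

theorem bivariate_normal_quadrant_probability_neg
    (ρ : ℝ) (hρ : ρ ∈ Set.Ioo (-1 : ℝ) 0) :
    ∫ x in Set.Ioi (0:ℝ), ∫ y in Set.Ioi (0:ℝ),
      (1 / (2 * π * Real.sqrt (1 - ρ^2))) *
        Real.exp (-(x^2 - 2*ρ*x*y + y^2) / (2 * (1 - ρ^2)))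
    = -(1 / (2 * π)) * Real.arctan (Real.sqrt (1 - ρ^2) / ρ) := by
  have hρ' : ρ ∈ Ioo (-1 : ℝ) 1 := ⟨hρ.1, hρ.2.trans one_pos⟩
  have hs : 0 < √(1 - ρ ^ 2) := sqrt_pos.2 (by nlinarith [hρ.1, hρ.2])
  rw [← inv_div ρ, arctan_inv_of_neg (div_neg_of_neg_of_pos hρ.2 hs), ← arcsin_eq_arctan hρ']
  refine (integral_Ioi_integral_Ioi_bivariateNormalDensity hρ').trans ?_
  field_simp
  ring
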